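/- Let p : [0,T] → ℝ solve ṗ = g(p) with p(0)=p₀ and let P be a function, piecewise smooth on a partition 0=t₀<...<t_N=T with jumps [P]_{n-1} at nodes, satisfying P(0⁻)=p₀. Let φ solve the backward adjoint problem −φ̇ = ḡ φ + ψ on [0,T] with φ(T)=0, where ḡ(t) = ∫₀¹ g'(p(t)s + P(t)(1−s)) ds. Then the error e = p − P satisfies ∫₀^T e ψ dt = Σ_{n=1}^N { ∫_{I_n} (g(P) − Ṗ) φ dt − [P]_{n-1} φ(t_{n-1}) }. -/

import Mathlib

/-!
On each interval `I_n` the product `(p - P) φ` is differentiable, and the secant identity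
`g(p) - g(P) = ḡ (p - P)` turns its derivative into `(g(P) - Ṗ) φ - e ψ`. Integrating over `I_n`
and summing, the boundary terms telescope into the jumps `[P]_n φ(t_n)`, while the two end terms
vanish because `p(0) = P(0⁻)` and `φ(T) = 0`.
-/

open intervalIntegral Set

lemma sub_eq_integral_deriv_mul_sub {g : ℝ → ℝ} (hg : ContDiff ℝ 1 g) (a b : ℝ) :
    g a - g b = (∫ r in (0:ℝ)..1, deriv g (r * a + (1 - r) * b)) * (a - b) := by
  have hline (r : ℝ) : HasDerivAt (fun r : ℝ => r * a + (1 - r) * b) (a - b) r := by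
    have h : HasDerivAt (fun r : ℝ => r * a + (1 - r) * b) (1 * a + (0 - 1) * b) r :=
      ((hasDerivAt_id' r).mul_const a).add
        (((hasDerivAt_const r 1).sub (hasDerivAt_id' r)).mul_const b)
    convert h using 1
    ring
  have hftc := integral_deriv_comp_mul_deriv (a := 0) (b := 1) (fun r _ => hline r)
    (fun r _ => ((hg.differentiable one_ne_zero) _).hasDerivAt) continuousOn_const
    (hg.continuous_deriv le_rfl)
  simp only [Function.comp_def, integral_mul_const] at hftc
  simpa using hftc.symm

lemma monotoneOn_Iic_of_le_succ {α : Type*} [Preorder α] {t : ℕ → α} {N : ℕ}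
    (ht : ∀ n < N, t n ≤ t (n + 1)) : MonotoneOn t (Iic N) :=
  monotoneOn_of_le_succ ordConnected_Iic fun n _ _ hn => ht n (Order.succ_le_iff.mp hn)

lemma integral_error_mul_adjoint_eq {g p P P' Pfun gbar φ ψ : ℝ → ℝ} {a b : ℝ} (hab : a ≤ b)
    (hp : ∀ s ∈ Icc a b, HasDerivAt p (g (p s)) s)
    (hP : ∀ s ∈ Icc a b, HasDerivAt P (P' s) s)
    (hPfun : ∀ s ∈ Ioo a b, Pfun s = P s)
    (hgbar : ∀ s ∈ Ioo a b, g (p s) - g (P s) = gbar s * (p s - P s))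
    (hφ : ∀ s ∈ Icc a b, HasDerivAt φ (-(gbar s * φ s + ψ s)) s)
    (hres : IntervalIntegrable (fun s => (g (P s) - P' s) * φ s) MeasureTheory.volume a b)
    (herr : IntervalIntegrable (fun s => (p s - Pfun s) * ψ s) MeasureTheory.volume a b) :
    ∫ s in a..b, (p s - Pfun s) * ψ s =
      (∫ s in a..b, (g (P s) - P' s) * φ s) - ((p b - P b) * φ b - (p a - P a) * φ a) := by
  have hderiv (s : ℝ) (hs : s ∈ Icc a b) :
      HasDerivAt (fun s => (p s - P s) * φ s)
        ((g (p s) - P' s) * φ s + (p s - P s) * -(gbar s * φ s + ψ s)) s :=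
    ((hp s hs).sub (hP s hs)).mul (hφ s hs)
  have hftc : ∫ s in a..b, ((g (P s) - P' s) * φ s - (p s - Pfun s) * ψ s) =
      (p b - P b) * φ b - (p a - P a) * φ a := by
    refine integral_eq_sub_of_hasDerivAt_of_le hab
      (fun s hs => (hderiv s hs).continuousAt.continuousWithinAt) (fun s hs => ?_) (hres.sub herr)
    refine (hderiv s (Ioo_subset_Icc_self hs)).congr_deriv ?_
    rw [hPfun s hs]
    linear_combination φ s * hgbar s hs
  rw [← hftc, integral_sub hres herr]
  ring

theorem ode_error_representation_general
    (g : ℝ → ℝ) (hg : ContDiff ℝ 1 g)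
    (T : ℝ) (N : ℕ)
    (t : ℕ → ℝ) (ht0 : t 0 = 0) (htN : t N = T)
    (htmono : ∀ n < N, t n < t (n + 1))
    (p0 : ℝ) (p : ℝ → ℝ)
    (hp : ∀ s ∈ Set.Icc (0:ℝ) T, HasDerivAt p (g (p s)) s)
    (hp0 : p 0 = p0)
    (Ppiece : ℕ → ℝ → ℝ) (Pdot : ℕ → ℝ → ℝ)
    (hP : ∀ n < N, ∀ s ∈ Set.Icc (t n) (t (n + 1)),
      HasDerivAt (Ppiece n) (Pdot n s) s)
    (Pfun : ℝ → ℝ)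
    (hPfun : ∀ n < N, ∀ s ∈ Set.Ioc (t n) (t (n + 1)), Pfun s = Ppiece n s)
    (Pminus : ℕ → ℝ)
    (hPminus0 : Pminus 0 = p0)
    (hPminus : ∀ n, Pminus (n + 1) = Ppiece n (t (n + 1)))
    (ψ : ℝ → ℝ)
    (gbar : ℝ → ℝ)
    (hgbar : ∀ s, gbar s = ∫ r in (0:ℝ)..1, deriv g (r * p s + (1 - r) * Pfun s))
    (φ : ℝ → ℝ)
    (hφ : ∀ s ∈ Set.Icc (0:ℝ) T, HasDerivAt φ (-(gbar s * φ s + ψ s)) s)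
    (hφT : φ T = 0)
    (hint : ∀ n < N, IntervalIntegrable
      (fun s => (g (Ppiece n s) - Pdot n s) * φ s) MeasureTheory.volume
      (t n) (t (n + 1)))
    (hint' : IntervalIntegrable (fun s => (p s - Pfun s) * ψ s)
      MeasureTheory.volume 0 T) :
    ∫ s in (0:ℝ)..T, (p s - Pfun s) * ψ s =
      ∑ n ∈ Finset.range N,
        ((∫ s in (t n)..(t (n + 1)), (g (Ppiece n s) - Pdot n s) * φ s) -
          (Ppiece n (t n) - Pminus n) * φ (t n)) := by
  have hmono := monotoneOn_Iic_of_le_succ fun n hn => (htmono n hn).le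
  have hsub (n : ℕ) (hn : n < N) : Icc (t n) (t (n + 1)) ⊆ Icc 0 T := by
    rw [← ht0, ← htN]
    exact Icc_subset_Icc (hmono (Nat.zero_le N) hn.le (Nat.zero_le n)) (hmono hn (le_refl N) hn)
  have herr (n : ℕ) (hn : n < N) :
      IntervalIntegrable (fun s => (p s - Pfun s) * ψ s) MeasureTheory.volume (t n) (t (n + 1)) :=
    hint'.mono_set <| by
      rw [uIcc_of_le (htmono n hn).le]
      exact (hsub n hn).trans Icc_subset_uIcc
  have hpiece (n : ℕ) (hn : n < N) := integral_error_mul_adjoint_eq (htmono n hn).le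
    (fun s hs => hp s (hsub n hn hs)) (hP n hn) (fun s hs => hPfun n hn s (Ioo_subset_Ioc_self hs))
    (fun s hs => by
      rw [hgbar, hPfun n hn s (Ioo_subset_Ioc_self hs)]
      exact sub_eq_integral_deriv_mul_sub hg _ _)
    (fun s hs => hφ s (hsub n hn hs)) (hint n hn) (herr n hn)
  have hsum := sum_integral_adjacent_intervals herr
  rw [ht0, htN] at hsum
  rw [← hsum, ← sub_eq_zero, ← Finset.sum_sub_distrib]
  set F : ℕ → ℝ := fun n => (p (t n) - Pminus n) * φ (t n)
  calc _ = ∑ n ∈ Finset.range N, -(F (n + 1) - F n) :=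
        Finset.sum_congr rfl fun n hn => by
          rw [hpiece n (Finset.mem_range.1 hn)]
          simp only [F, hPminus]
          ring
    _ = 0 := by
      rw [Finset.sum_neg_distrib, Finset.sum_range_sub]
      simp [F, htN, hφT, ht0, hp0, hPminus0]

/-- A posteriori error representation for the scalar ODE prototype:
if `p` solves `ṗ = g(p)`, `P` is piecewise smooth (pieces `Ppiece n` on
`I_n = (t_n, t_{n+1}]`, with left-hand values `Pminus` at the nodes and
`P(0⁻) = p₀`), and `φ` solves the backward adjoint problem
`−φ̇ = ḡ φ + ψ`, `φ(T) = 0`, with `ḡ(s) = ∫₀¹ g'(p(s)r + P(s)(1−r)) dr`, then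
`∫₀^T e ψ dt = Σ_n { ∫_{I_n} (g(P) − Ṗ) φ dt − [P]_{n} φ(t_n) }` where
`e = p − P` and `[P]_n = P⁺_n − P⁻_n`. -/
theorem ode_error_representation
    (g : ℝ → ℝ) (hg : ContDiff ℝ 1 g)
    (T : ℝ) (hT : 0 < T) (N : ℕ) (hN : 0 < N)
    (t : ℕ → ℝ) (ht0 : t 0 = 0) (htN : t N = T)
    (htmono : ∀ n < N, t n < t (n + 1))
    (p0 : ℝ) (p : ℝ → ℝ)
    (hp : ∀ s ∈ Set.Icc (0:ℝ) T, HasDerivAt p (g (p s)) s)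
    (hp0 : p 0 = p0)
    (Ppiece : ℕ → ℝ → ℝ) (Pdot : ℕ → ℝ → ℝ)
    (hP : ∀ n < N, ∀ s ∈ Set.Icc (t n) (t (n + 1)),
      HasDerivAt (Ppiece n) (Pdot n s) s)
    (Pfun : ℝ → ℝ)
    (hPfun : ∀ n < N, ∀ s ∈ Set.Ioc (t n) (t (n + 1)), Pfun s = Ppiece n s)
    (Pminus : ℕ → ℝ)
    (hPminus0 : Pminus 0 = p0)
    (hPminus : ∀ n, Pminus (n + 1) = Ppiece n (t (n + 1)))
    (ψ : ℝ → ℝ) (hψ : IntervalIntegrable ψ MeasureTheory.volume 0 T)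
    (gbar : ℝ → ℝ)
    (hgbar : ∀ s, gbar s = ∫ r in (0:ℝ)..1, deriv g (r * p s + (1 - r) * Pfun s))
    (φ : ℝ → ℝ)
    (hφ : ∀ s ∈ Set.Icc (0:ℝ) T, HasDerivAt φ (-(gbar s * φ s + ψ s)) s)
    (hφT : φ T = 0)
    (hint : ∀ n < N, IntervalIntegrable
      (fun s => (g (Ppiece n s) - Pdot n s) * φ s) MeasureTheory.volume
      (t n) (t (n + 1)))
    (hint' : IntervalIntegrable (fun s => (p s - Pfun s) * ψ s)
      MeasureTheory.volume 0 T) :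
    ∫ s in (0:ℝ)..T, (p s - Pfun s) * ψ s =
      ∑ n ∈ Finset.range N,
        ((∫ s in (t n)..(t (n + 1)), (g (Ppiece n s) - Pdot n s) * φ s) -
          (Ppiece n (t n) - Pminus n) * φ (t n)) :=
  ode_error_representation_general g hg T N t ht0 htN htmono p0 p hp hp0 Ppiece Pdot hP Pfun hPfun
    Pminus hPminus0 hPminus ψ gbar hgbar φ hφ hφT hint hint'
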